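/- arXiv:2305.04319 — 3 statements merged into one kernel-verified Lean document; each statement's English description precedes it below -/
import Mathlib

section
/- The extended binomial pmf P(X=x) = p^x q^{z-x} ₀F̃₁(;x+1;p²θ) ₀F̃₁(;z-x+1;q²θ) / ₀F̃₁(;z+1;θ) defines a probability distribution on ℤ, i.e., ∑_{x∈ℤ} p^x q^{z-x} ₀F̃₁(;x+1;p²θ) ₀F̃₁(;z-x+1;q²θ) = ₀F̃₁(;z+1;θ) for every z ∈ ℤ, 0<p<1, q=1-p, θ>0. -/
/-!
With `e_c(n) = cⁿ/n!` (and `e_c(n) = 0` for `n < 0`), the series of `₀F̃₁` at an integer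
parameter reads `c^y ₀F̃₁(; y + 1; c s) = ∑ⱼ e_s(j) e_c(y + j)`. The summand at `x` is then a
double series in `e_{pθ}(j) e_{qθ}(k) e_p(x + j) e_q(z - x + k)`. Summing first over `x`, then
over `j` with `j + k` fixed, uses the binomial convolution `∑ₐ e_p(a) e_q(n - a) = e_{p+q}(n)`
twice; since `p + q = 1` what is left is `∑ₘ e_θ(m) e_1(z + m) = ₀F̃₁(; z + 1; θ)`. All terms are
nonnegative, so the rearrangements are done in `ℝ≥0∞`.
-/

open MeasureTheory Real

/-- Modified Bessel function of the first kind of integer order `y`: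
`I_y(x) = ∑_{k≥0} (x/2)^(y+2k) / (k! * Γ(y+k+1))`, with terms where
`Γ` is evaluated at a nonpositive integer interpreted as zero. -/
noncomputable def besselI (y : ℤ) (x : ℝ) : ℝ :=
  ∑' k : ℕ, (x / 2) ^ (y + 2 * (k : ℤ)) / ((Nat.factorial k : ℝ) * Real.Gamma ((y : ℝ) + k + 1))

/-- Regularized confluent hypergeometric function `₀F̃₁(; y; θ) = ∑_{k≥0} θ^k/(k! Γ(y+k))`. -/
noncomputable def regF (y : ℝ) (θ : ℝ) : ℝ :=
  ∑' k : ℕ, θ ^ k / ((Nat.factorial k : ℝ) * Real.Gamma (y + k))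

/-- Skellam (Poisson difference) pmf `PD(a,b)` at `z`. -/
noncomputable def skellamPMF (a b : ℝ) (z : ℤ) : ℝ :=
  Real.exp (-a - b) * (a / b) ^ ((z : ℝ) / 2) * besselI z (2 * Real.sqrt (a * b))

/-- Extended binomial pmf `EB(z, p, θ)` at `x`. -/
noncomputable def ebPMF (z : ℤ) (p θ : ℝ) (x : ℤ) : ℝ :=
  p ^ x * (1 - p) ^ (z - x) * regF ((x : ℝ) + 1) (p ^ 2 * θ) *
    regF (((z - x : ℤ) : ℝ) + 1) ((1 - p) ^ 2 * θ) / regF ((z : ℝ) + 1) θ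

open Finset
open scoped Nat
open ENNReal (ofReal)

theorem HasSum.tsum_ofReal_eq {ι : Type*} {f : ι → ℝ} {a : ℝ} (h : HasSum f a)
    (hf : ∀ i, 0 ≤ f i) :
    ∑' i, ofReal (f i) = ofReal a := by
  rw [← ENNReal.ofReal_tsum_of_nonneg hf h.summable, h.tsum_eq]

theorem tsum_eq_of_tsum_ofReal_eq {ι : Type*} {f : ι → ℝ} {a : ℝ} (hf : ∀ i, 0 ≤ f i) (ha : 0 ≤ a)
    (h : ∑' i, ofReal (f i) = ofReal a) : ∑' i, f i = a :=
  calc ∑' i, f i = ∑' i, (ofReal (f i)).toReal :=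
        tsum_congr fun i => (ENNReal.toReal_ofReal (hf i)).symm
    _ = (∑' i, ofReal (f i)).toReal := (ENNReal.tsum_toReal_eq fun _ => ENNReal.ofReal_ne_top).symm
    _ = a := by rw [h, ENNReal.toReal_ofReal ha]

theorem add_pow_div_factorial (p q : ℝ) (n : ℕ) :
    (p + q) ^ n / n ! = ∑ m ∈ range (n + 1), p ^ m / m ! * (q ^ (n - m) / (n - m)!) := by
  rw [add_pow, sum_div]
  refine sum_congr rfl fun m hm => ?_
  rw [Nat.cast_choose ℝ (Nat.lt_succ_iff.mp (mem_range.mp hm)), mul_div_assoc,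
    div_div_cancel_left' (by positivity)]
  ring

/-- `c ^ n / n!`, extended by zero to negative `n`: there `Γ (n + 1) = 0` and `x / 0 = 0`. -/
noncomputable def expCoeff (c : ℝ) (n : ℤ) : ℝ := c ^ n / Gamma (n + 1)

theorem expCoeff_natCast (c : ℝ) (n : ℕ) : expCoeff c n = c ^ n / n ! := by
  rw [expCoeff, zpow_natCast, Int.cast_natCast, Gamma_nat_eq_factorial]

theorem expCoeff_of_neg (c : ℝ) {n : ℤ} (hn : n < 0) : expCoeff c n = 0 := by
  obtain ⟨m, hm⟩ : ∃ m : ℕ, n + 1 = -(m : ℤ) := ⟨(-(n + 1)).toNat, by omega⟩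
  rw [expCoeff, show (n : ℝ) + 1 = -(m : ℝ) by exact_mod_cast hm, Gamma_neg_nat_eq_zero, div_zero]

theorem expCoeff_nonneg {c : ℝ} (hc : 0 ≤ c) (n : ℤ) : 0 ≤ expCoeff c n := by
  rcases lt_or_ge n 0 with hn | hn
  · rw [expCoeff_of_neg c hn]
  · lift n to ℕ using hn
    rw [expCoeff_natCast]
    positivity

theorem expCoeff_one_le_one (n : ℤ) : expCoeff 1 n ≤ 1 := by
  rcases lt_or_ge n 0 with hn | hn
  · rw [expCoeff_of_neg 1 hn]
    exact zero_le_one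
  · lift n to ℕ using hn
    rw [expCoeff_natCast, one_pow, one_div]
    exact inv_le_one_of_one_le₀ (by exact_mod_cast n.factorial_pos)

theorem hasSum_expCoeff_mul_natCast_iff (c : ℝ) (f : ℤ → ℝ) (a : ℝ) :
    HasSum (fun n : ℕ => expCoeff c n * f n) a ↔ HasSum (fun n : ℤ => expCoeff c n * f n) a := by
  refine (Nat.cast_injective (R := ℤ)).hasSum_iff (f := fun n => expCoeff c n * f n)
    fun n hn => ?_
  rw [expCoeff_of_neg c (not_le.mp fun h => hn ⟨n.toNat, Int.toNat_of_nonneg h⟩), zero_mul]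

theorem hasSum_expCoeff_mul_expCoeff_sub (p q : ℝ) (n : ℤ) :
    HasSum (fun a : ℤ => expCoeff p a * expCoeff q (n - a)) (expCoeff (p + q) n) := by
  rcases lt_or_ge n 0 with hn | hn
  · have hterm (a : ℤ) : expCoeff p a * expCoeff q (n - a) = 0 := by
      rcases lt_or_ge a 0 with ha | ha
      · rw [expCoeff_of_neg p ha, zero_mul]
      · rw [expCoeff_of_neg q (by omega), mul_zero]
    simpa only [hterm, expCoeff_of_neg _ hn] using hasSum_zero
  lift n to ℕ using hn
  refine (hasSum_expCoeff_mul_natCast_iff p (fun a => expCoeff q (n - a)) _).mp ?_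
  convert hasSum_sum_of_ne_finset_zero (L := .unconditional ℕ) (s := range (n + 1))
    fun m hm => ?_ using 1
  · rw [expCoeff_natCast, add_pow_div_factorial]
    refine sum_congr rfl fun m hm => ?_
    rw [← Nat.cast_sub (Nat.lt_succ_iff.mp (mem_range.mp hm)), expCoeff_natCast, expCoeff_natCast]
  · rw [expCoeff_of_neg q (by simp only [mem_range, not_lt] at hm; omega), mul_zero]

theorem regF_intCast_add_one (y : ℤ) (t : ℝ) :
    regF (y + 1) t = ∑' k : ℕ, expCoeff t k * expCoeff 1 (y + k) := by
  refine tsum_congr fun k => ?_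
  rw [expCoeff_natCast, expCoeff, one_zpow, Int.cast_add, Int.cast_natCast, add_right_comm]
  ring

theorem regF_intCast_add_one_nonneg (y : ℤ) {t : ℝ} (ht : 0 ≤ t) : 0 ≤ regF (y + 1) t := by
  rw [regF_intCast_add_one]
  exact tsum_nonneg fun k => mul_nonneg (expCoeff_nonneg ht _) (expCoeff_nonneg zero_le_one _)

theorem summable_expCoeff_mul_expCoeff_one (t : ℝ) (y : ℤ) :
    Summable fun k : ℕ => expCoeff t k * expCoeff 1 (y + k) := by
  refine .of_norm_bounded (Real.summable_pow_div_factorial |t|) fun k => ?_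
  calc ‖expCoeff t k * expCoeff 1 (y + k)‖ = |t| ^ k / k ! * expCoeff 1 (y + k) := by
        rw [norm_mul, Real.norm_of_nonneg (expCoeff_nonneg zero_le_one _), expCoeff_natCast,
          Real.norm_eq_abs, abs_div, abs_pow, Nat.abs_cast]
    _ ≤ |t| ^ k / k ! := mul_le_of_le_one_right (by positivity) (expCoeff_one_le_one _)

theorem hasSum_expCoeff_mul_expCoeff_add {c : ℝ} (hc : c ≠ 0) (s : ℝ) (y : ℤ) :
    HasSum (fun j : ℤ => expCoeff s j * expCoeff c (y + j)) (c ^ y * regF (y + 1) (c * s)) := by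
  refine (hasSum_expCoeff_mul_natCast_iff s (fun j => expCoeff c (y + j)) _).mp ?_
  rw [regF_intCast_add_one, ← tsum_mul_left]
  refine ((summable_expCoeff_mul_expCoeff_one (c * s) y).mul_left (c ^ y)).hasSum.congr_fun
    fun k => ?_
  simp only [expCoeff, one_zpow, zpow_add₀ hc, zpow_natCast, mul_pow]
  ring

theorem tsum_ofReal_expCoeff_mul_expCoeff_sub {p q : ℝ} (hp : 0 ≤ p) (hq : 0 ≤ q) (n : ℤ) :
    ∑' a : ℤ, ofReal (expCoeff p a) * ofReal (expCoeff q (n - a)) =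
      ofReal (expCoeff (p + q) n) := by
  simp_rw [← ENNReal.ofReal_mul (expCoeff_nonneg hp _)]
  exact (hasSum_expCoeff_mul_expCoeff_sub p q n).tsum_ofReal_eq fun a =>
    mul_nonneg (expCoeff_nonneg hp _) (expCoeff_nonneg hq _)

theorem tsum_ofReal_expCoeff_add_mul_expCoeff_sub {p q : ℝ} (hp : 0 ≤ p) (hq : 0 ≤ q) (j n : ℤ) :
    ∑' x : ℤ, ofReal (expCoeff p (x + j)) * ofReal (expCoeff q (n - x)) =
      ofReal (expCoeff (p + q) (n + j)) := by
  rw [← tsum_ofReal_expCoeff_mul_expCoeff_sub hp hq,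
    ← (Equiv.addRight j).tsum_eq fun a => ofReal (expCoeff p a) * ofReal (expCoeff q (n + j - a))]
  simp only [Equiv.coe_addRight, add_sub_add_right_eq_sub]

theorem tsum_ofReal_expCoeff_mul_expCoeff_add {c s : ℝ} (hc : 0 < c) (hs : 0 ≤ s) (y : ℤ) :
    ∑' j : ℤ, ofReal (expCoeff s j) * ofReal (expCoeff c (y + j)) =
      ofReal (c ^ y * regF (y + 1) (c * s)) := by
  simp_rw [← ENNReal.ofReal_mul (expCoeff_nonneg hs _)]
  exact (hasSum_expCoeff_mul_expCoeff_add hc.ne' s y).tsum_ofReal_eq fun j =>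
    mul_nonneg (expCoeff_nonneg hs _) (expCoeff_nonneg hc.le _)

theorem tsum_ofReal_zpow_mul_regF_mul {p q θ : ℝ} (hp : 0 < p) (hq : 0 < q) (hpq : p + q = 1)
    (hθ : 0 ≤ θ) (z : ℤ) :
    ∑' x : ℤ, ofReal (p ^ x * regF (x + 1) (p * (p * θ))) *
        ofReal (q ^ (z - x) * regF ((z - x : ℤ) + 1) (q * (q * θ))) =
      ofReal (regF (z + 1) θ) := by
  have hpθ : 0 ≤ p * θ := by positivity
  have hqθ : 0 ≤ q * θ := by positivity
  calc _ = ∑' x : ℤ, (∑' j : ℤ, ofReal (expCoeff (p * θ) j) * ofReal (expCoeff p (x + j))) *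
          ∑' k : ℤ, ofReal (expCoeff (q * θ) k) * ofReal (expCoeff q (z - x + k)) := by
        simp_rw [tsum_ofReal_expCoeff_mul_expCoeff_add hp hpθ,
          tsum_ofReal_expCoeff_mul_expCoeff_add hq hqθ]
    _ = ∑' (j : ℤ) (k : ℤ), ofReal (expCoeff (p * θ) j) * ofReal (expCoeff (q * θ) k) *
          ∑' x : ℤ, ofReal (expCoeff p (x + j)) * ofReal (expCoeff q (z - x + k)) := by
        simp_rw [← ENNReal.tsum_mul_right, ← ENNReal.tsum_mul_left]
        rw [ENNReal.tsum_comm]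
        refine tsum_congr fun j => ?_
        rw [ENNReal.tsum_comm]
        refine tsum_congr fun k => tsum_congr fun x => ?_
        ring
    _ = ∑' (j : ℤ) (k : ℤ), ofReal (expCoeff (p * θ) j) * ofReal (expCoeff (q * θ) k) *
          ofReal (expCoeff 1 (z + (j + k))) := by
        refine tsum_congr fun j => tsum_congr fun k => ?_
        simp_rw [sub_add_eq_add_sub, tsum_ofReal_expCoeff_add_mul_expCoeff_sub hp.le hq.le, hpq]
        ring_nf
    _ = ∑' m : ℤ, (∑' j : ℤ, ofReal (expCoeff (p * θ) j) * ofReal (expCoeff (q * θ) (m - j))) *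
          ofReal (expCoeff 1 (z + m)) := by
        simp_rw [← ENNReal.tsum_mul_right]
        conv_rhs => rw [ENNReal.tsum_comm]
        refine tsum_congr fun j => ?_
        rw [← (Equiv.subRight j).tsum_eq]
        refine tsum_congr fun m => ?_
        simp only [Equiv.subRight_apply, add_sub_cancel]
    _ = ∑' m : ℤ, ofReal (expCoeff θ m) * ofReal (expCoeff 1 (z + m)) := by
        simp_rw [tsum_ofReal_expCoeff_mul_expCoeff_sub hpθ hqθ, ← add_mul, hpq, one_mul]
    _ = ofReal (regF (z + 1) θ) := by
        rw [tsum_ofReal_expCoeff_mul_expCoeff_add one_pos hθ, one_zpow, one_mul, one_mul]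

theorem eb_pmf_sums_to_one (z : ℤ) (p θ : ℝ) (hp : 0 < p) (hp1 : p < 1) (hθ : 0 < θ) :
    ∑' x : ℤ, p ^ x * (1 - p) ^ (z - x) * regF ((x : ℝ) + 1) (p ^ 2 * θ) *
        regF (((z - x : ℤ) : ℝ) + 1) ((1 - p) ^ 2 * θ)
      = regF ((z : ℝ) + 1) θ := by
  have hq : 0 < 1 - p := sub_pos.mpr hp1
  have hfactor_nonneg (y : ℤ) {c : ℝ} (hc : 0 < c) : 0 ≤ c ^ y * regF (y + 1) (c * (c * θ)) :=
    mul_nonneg (zpow_nonneg hc.le y) (regF_intCast_add_one_nonneg y (by positivity))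
  have hterm (x : ℤ) :
      p ^ x * (1 - p) ^ (z - x) * regF (x + 1) (p ^ 2 * θ) *
          regF ((z - x : ℤ) + 1) ((1 - p) ^ 2 * θ) =
        p ^ x * regF (x + 1) (p * (p * θ)) *
          ((1 - p) ^ (z - x) * regF ((z - x : ℤ) + 1) ((1 - p) * ((1 - p) * θ))) := by
    rw [sq, sq, mul_assoc p, mul_assoc (1 - p)]
    ring
  rw [tsum_congr hterm]
  refine tsum_eq_of_tsum_ofReal_eq
    (fun x => mul_nonneg (hfactor_nonneg x hp) (hfactor_nonneg _ hq))
    (regF_intCast_add_one_nonneg z hθ.le) ?_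
  simp_rw [ENNReal.ofReal_mul (hfactor_nonneg _ hp)]
  exact tsum_ofReal_zpow_mul_regF_mul hp hq (add_sub_cancel p 1) hθ.le z
end

section
/- If W ~ PD(θ₁,θ₂) and R ~ PD(θ₃,θ₄) are independent Skellam random variables with θ₁θ₄ = θ₂θ₃, then the conditional distribution of W given W+R = z is EB(z, p, θ) with p = θ₁/(θ₁+θ₃) and θ = (θ₁+θ₃)(θ₂+θ₄); that is, P(W=w | W+R=z) = p^w q^{z-w} ₀F̃₁(;w+1;p²θ) ₀F̃₁(;z-w+1;q²θ) / ₀F̃₁(;z+1;θ) with q=1-p. -/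
open MeasureTheory Real

/-!
The Bessel series is the `₀F̃₁` series up to a power prefactor, `I_n(2√x) = x^(n/2) ₀F̃₁(; n+1; x)`,
so `PD(a,b)(n) = e^{-a-b} aⁿ ₀F̃₁(; n+1; ab)`. In these terms the joint pmf of `(W, R)` at `(w, z - w)` carries
`θ₁^w θ₃^(z-w) = pʷ q^(z-w) (θ₁+θ₃)^z`, while the constraint `θ₁θ₄ = θ₂θ₃` is exactly what makes
`θ₁θ₂ = p²θ` and `θ₃θ₄ = q²θ`; the factors `e^{…}(θ₁+θ₃)^z` then cancel against `PD(θ₁+θ₃, θ₂+θ₄)(z)`.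
-/

lemma sqrt_zpow_add_two_mul {x : ℝ} (hx : 0 < x) (n : ℤ) (k : ℕ) :
    √x ^ (n + 2 * (k : ℤ)) = x ^ ((n : ℝ) / 2) * x ^ k := by
  rw [← Real.rpow_intCast, Real.sqrt_eq_rpow, ← Real.rpow_natCast x k, ← Real.rpow_mul hx.le,
    ← Real.rpow_add hx]
  push_cast
  ring_nf

lemma besselI_two_mul_sqrt {x : ℝ} (hx : 0 < x) (n : ℤ) :
    besselI n (2 * √x) = x ^ ((n : ℝ) / 2) * regF ((n : ℝ) + 1) x := by
  unfold besselI regF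
  rw [← tsum_mul_left]
  congr 1 with k
  rw [mul_div_cancel_left₀ _ two_ne_zero, sqrt_zpow_add_two_mul hx, mul_div_assoc,
    add_right_comm (n : ℝ) k 1]

lemma div_rpow_half_mul_mul_rpow_half {a b : ℝ} (ha : 0 < a) (hb : 0 < b) (n : ℤ) :
    (a / b) ^ ((n : ℝ) / 2) * (a * b) ^ ((n : ℝ) / 2) = a ^ n := by
  have hsq : a / b * (a * b) = a ^ (2 : ℝ) := by
    rw [Real.rpow_two]
    field_simp
  rw [← Real.mul_rpow (by positivity) (by positivity), hsq, ← Real.rpow_mul ha.le,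
    ← Real.rpow_intCast]
  ring_nf

lemma skellamPMF_eq {a b : ℝ} (ha : 0 < a) (hb : 0 < b) (n : ℤ) :
    skellamPMF a b n = Real.exp (-a - b) * a ^ n * regF ((n : ℝ) + 1) (a * b) := by
  rw [skellamPMF, besselI_two_mul_sqrt (mul_pos ha hb), ← div_rpow_half_mul_mul_rpow_half ha hb]
  ring

lemma zpow_mul_zpow_sub_eq {a b s : ℝ} (hs : s ≠ 0) (z w : ℤ) :
    a ^ w * b ^ (z - w) = s ^ z * ((a / s) ^ w * (b / s) ^ (z - w)) := by
  rw [div_zpow, div_zpow, div_mul_div_comm, ← zpow_add₀ hs, add_sub_cancel,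
    mul_div_cancel₀ _ (zpow_ne_zero z hs)]

theorem eb_is_conditional_of_skellam (θ₁ θ₂ θ₃ θ₄ : ℝ)
    (h₁ : 0 < θ₁) (h₂ : 0 < θ₂) (h₃ : 0 < θ₃) (h₄ : 0 < θ₄)
    (hconstraint : θ₁ * θ₄ = θ₂ * θ₃) (z w : ℤ) :
    skellamPMF θ₁ θ₂ w * skellamPMF θ₃ θ₄ (z - w) / skellamPMF (θ₁ + θ₃) (θ₂ + θ₄) z
      = ebPMF z (θ₁ / (θ₁ + θ₃)) ((θ₁ + θ₃) * (θ₂ + θ₄)) w := by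
  have hs : 0 < θ₁ + θ₃ := by positivity
  have hq : 1 - θ₁ / (θ₁ + θ₃) = θ₃ / (θ₁ + θ₃) := by field_simp; ring
  have hp_sq : (θ₁ / (θ₁ + θ₃)) ^ 2 * ((θ₁ + θ₃) * (θ₂ + θ₄)) = θ₁ * θ₂ := by
    field_simp; linear_combination hconstraint
  have hq_sq : (θ₃ / (θ₁ + θ₃)) ^ 2 * ((θ₁ + θ₃) * (θ₂ + θ₄)) = θ₃ * θ₄ := by
    field_simp; linear_combination -hconstraint
  have hexp : Real.exp (-θ₁ - θ₂) * Real.exp (-θ₃ - θ₄)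
      = Real.exp (-(θ₁ + θ₃) - (θ₂ + θ₄)) := by
    rw [← Real.exp_add]; ring_nf
  have hzpow := zpow_mul_zpow_sub_eq (a := θ₁) (b := θ₃) hs.ne' z w
  rw [skellamPMF_eq h₁ h₂, skellamPMF_eq h₃ h₄, skellamPMF_eq hs (by positivity), ebPMF, hq,
    hp_sq, hq_sq, ← mul_div_mul_left _ (regF (z + 1) _)
      (by positivity : Real.exp (-(θ₁ + θ₃) - (θ₂ + θ₄)) * (θ₁ + θ₃) ^ z ≠ 0)]
  congr 1
  rw [← hexp]
  linear_combination Real.exp (-θ₁ - θ₂) * Real.exp (-θ₃ - θ₄) * regF (w + 1) (θ₁ * θ₂)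
    * regF ((z - w : ℤ) + 1) (θ₃ * θ₄) * hzpow
end

section
/- The Pegram mixture model Z_t = (φ, δ S_{α,θ}(Z_{t-1})) * (1-φ, ε_t) has one-step transition probability P(Z_t=z_t | Z_{t-1}=z_{t-1}) = φ·P(S_{α,θ}(Z_{t-1}) = δ z_t | Z_{t-1}=z_{t-1}) + (1-φ)·P(ε_t = z_t), where the first summand equals φ p^{δz_t}(1-p)^{z_{t-1}-δz_t} ₀F̃₁(;δz_t+1;p²θ) ₀F̃₁(;z_{t-1}-δz_t+1;(1-p)²θ)/₀F̃₁(;z_{t-1}+1;θ) and the second equals the Skellam(θ₁,θ₂) pmf at z_t. -/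
open MeasureTheory Real

theorem mesinar_transition_probability {Ω : Type*} [MeasurableSpace Ω]
    (μ : Measure Ω) [IsProbabilityMeasure μ]
    (V : Ω → Bool) (S ε : Ω → ℤ) (hV : Measurable V) (hS : Measurable S) (hε : Measurable ε)
    (φ p θ θ₁ θ₂ : ℝ) (δ : ℤ) (hδ : δ = 1 ∨ δ = -1)
    (hφ : 0 < φ) (hφ1 : φ < 1) (hp : 0 < p) (hp1 : p < 1)
    (hθ : 0 < θ) (h₁ : 0 < θ₁) (h₂ : 0 < θ₂)
    (m : ℤ)
    (hVlaw : (μ {ω | V ω = true}).toReal = φ)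
    (hSlaw : ∀ w : ℤ, (μ {ω | S ω = w}).toReal = ebPMF m p θ w)
    (hεlaw : ∀ w : ℤ, (μ {ω | ε ω = w}).toReal = skellamPMF θ₁ θ₂ w)
    (hindep : ProbabilityTheory.IndepFun V (fun ω => (S ω, ε ω)) μ)
    (n : ℤ) :
    (μ {ω | (if V ω then δ * S ω else ε ω) = n}).toReal
      = φ * ebPMF m p θ (δ * n) + (1 - φ) * skellamPMF θ₁ θ₂ n := by
  classical
  have hEq : {ω | (if V ω then δ * S ω else ε ω) = n}
      = (V ⁻¹' {true} ∩ (fun ω => (S ω, ε ω)) ⁻¹' ({δ * n} ×ˢ (Set.univ : Set ℤ))) ∪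
        (V ⁻¹' {false} ∩ (fun ω => (S ω, ε ω)) ⁻¹' ((Set.univ : Set ℤ) ×ˢ {n})) := by
    ext ω
    rcases hδ with h | h <;> subst h <;> by_cases hv : V ω <;>
      simp [hv] <;> omega
  have h1 := hindep.measure_inter_preimage_eq_mul ({true} : Set Bool)
    ({δ * n} ×ˢ (Set.univ : Set ℤ)) (measurableSet_singleton _)
    ((measurableSet_singleton _).prod MeasurableSet.univ)
  have h2 := hindep.measure_inter_preimage_eq_mul ({false} : Set Bool)
    ((Set.univ : Set ℤ) ×ˢ {n}) (measurableSet_singleton _)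
    (MeasurableSet.univ.prod (measurableSet_singleton _))
  have hpre1 : (fun ω => (S ω, ε ω)) ⁻¹' ({δ * n} ×ˢ (Set.univ : Set ℤ))
      = {ω | S ω = δ * n} := by ext ω; simp [eq_comm]
  have hpre2 : (fun ω => (S ω, ε ω)) ⁻¹' ((Set.univ : Set ℤ) ×ˢ {n})
      = {ω | ε ω = n} := by ext ω; simp [eq_comm]
  have hVt : V ⁻¹' {true} = {ω | V ω = true} := by ext ω; simp
  have hdisj : Disjoint
      (V ⁻¹' {true} ∩ (fun ω => (S ω, ε ω)) ⁻¹' ({δ * n} ×ˢ (Set.univ : Set ℤ)))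
      (V ⁻¹' {false} ∩ (fun ω => (S ω, ε ω)) ⁻¹' ((Set.univ : Set ℤ) ×ˢ {n})) := by
    refine Set.disjoint_left.2 fun ω h1 h2 => ?_
    have := h1.1; have := h2.1
    simp at *
    simp_all
  have hmeas2 : MeasurableSet
      (V ⁻¹' {false} ∩ (fun ω => (S ω, ε ω)) ⁻¹' ((Set.univ : Set ℤ) ×ˢ {n})) := by
    exact (hV (measurableSet_singleton _)).inter
      ((hS.prodMk hε) (MeasurableSet.univ.prod (measurableSet_singleton _)))
  have hμfalse : (μ (V ⁻¹' {false})).toReal = 1 - φ := by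
    have hc : V ⁻¹' {false} = (V ⁻¹' {true})ᶜ := by ext ω; simp
    rw [hc, measure_compl (hV (measurableSet_singleton _)) (measure_ne_top μ _),
      measure_univ, ENNReal.toReal_sub_of_le prob_le_one ENNReal.one_ne_top]
    simp [hVt, hVlaw]
  rw [hEq, measure_union hdisj hmeas2, h1, h2, ENNReal.toReal_add
    (ENNReal.mul_ne_top (measure_ne_top μ _) (measure_ne_top μ _))
    (ENNReal.mul_ne_top (measure_ne_top μ _) (measure_ne_top μ _)),
    ENNReal.toReal_mul, ENNReal.toReal_mul, hpre1, hpre2, hVt, hVlaw, hμfalse,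
    hSlaw, hεlaw]
end
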